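/- Induction rule for acc-relative indexical common knowledge: let φ, ψ : Point → Prop. Suppose that for every agent i and every point p, if i ∈ H p, ψ p, and acc p hold then (Y (E_H^{acc} (fun q => φ q ∧ ψ q))) p holds. Then for every agent i and every point p, if i ∈ H p, ψ p, and acc p hold then (C_H^{Y,acc} φ) p holds. -/

import Mathlib

/-!
Put `G := ψ ∧ acc ∧ (H ≠ ∅)`. Since `E_H^{acc}` only inspects points that satisfy `acc` and
contain the agent in `H`, the hypothesis yields `G ≤ Y (E_H^{acc} (φ ∧ G))`. As `Y ∘ E_H^{acc}`
is monotone, such a post-fixpoint lies below every iterate `(Y∘E_H^{acc})^{n+1} φ`.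
-/

/-- The simple modal operator induced by the relation `Y`. -/
def Yop {Point : Type*} (Y : Point → Point → Prop) (φ : Point → Prop) (p : Point) : Prop :=
  ∀ q, Y p q → φ q

/-- `acc`-guarded belief of agent `i` relative to the indexical set `H`:
`(B_i^{H,acc} φ) p := ∀ q, q ∼_i p → i ∈ H q → acc q → φ q`. -/
def BopAcc {Point Agent : Type*} (H : Point → Set Agent) (acc : Point → Prop)
    (sim : Agent → Point → Point → Prop)
    (i : Agent) (φ : Point → Prop) (p : Point) : Prop :=
  ∀ q, sim i q p → i ∈ H q → acc q → φ q

/-- `(E_H^{acc} φ) p := ∀ i ∈ H p, (B_i^{H,acc} φ) p`. -/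
def EopAcc {Point Agent : Type*} (H : Point → Set Agent) (acc : Point → Prop)
    (sim : Agent → Point → Point → Prop) (φ : Point → Prop) (p : Point) : Prop :=
  ∀ i ∈ H p, BopAcc H acc sim i φ p

/-- `(Y∘E_H^{acc})^n`, with `(Y∘E_H^{acc})^0 = id` and
`(Y∘E_H^{acc})^{n+1} φ = Y (E_H^{acc} ((Y∘E_H^{acc})^n φ))`. -/
def YEiterAcc {Point Agent : Type*} (H : Point → Set Agent) (acc : Point → Prop)
    (sim : Agent → Point → Point → Prop)
    (Y : Point → Point → Prop) : ℕ → (Point → Prop) → (Point → Prop)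
  | 0, φ => φ
  | n + 1, φ => Yop Y (EopAcc H acc sim (YEiterAcc H acc sim Y n φ))

/-- `acc`-relative indexical common knowledge:
`(C_H^{Y,acc} φ) p := ∀ n ≥ 1, ((Y∘E_H^{acc})^n φ) p`. -/
def CopAcc {Point Agent : Type*} (H : Point → Set Agent) (acc : Point → Prop)
    (sim : Agent → Point → Point → Prop)
    (Y : Point → Point → Prop) (φ : Point → Prop) (p : Point) : Prop :=
  ∀ n, 1 ≤ n → YEiterAcc H acc sim Y n φ p

/-- A single `(H-Y-acc)`-reachability step: there are an agent `i` and a point `p'`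
with `Y p p'`, `i ∈ H p'`, `i ∈ H q`, `acc q`, and `q ∼_i p'`. -/
def StepAcc {Point Agent : Type*} (H : Point → Set Agent) (acc : Point → Prop)
    (sim : Agent → Point → Point → Prop)
    (Y : Point → Point → Prop) (p q : Point) : Prop :=
  ∃ (i : Agent) (p' : Point), Y p p' ∧ i ∈ H p' ∧ i ∈ H q ∧ acc q ∧ sim i q p'

/-- `q` is `(H-Y-acc)`-reachable from `p` in `k` steps. -/
def ReachNAcc {Point Agent : Type*} (H : Point → Set Agent) (acc : Point → Prop)
    (sim : Agent → Point → Point → Prop)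
    (Y : Point → Point → Prop) : ℕ → Point → Point → Prop
  | 0, p, q => p = q
  | k + 1, p, q => ∃ mid, StepAcc H acc sim Y p mid ∧ ReachNAcc H acc sim Y k mid q

theorem Yop_mono {Point : Type*} (Y : Point → Point → Prop) : Monotone (Yop Y) :=
  fun _ _ hle _ h q hq => hle q (h q hq)

theorem EopAcc_mono {Point Agent : Type*} (H : Point → Set Agent) (acc : Point → Prop)
    (sim : Agent → Point → Point → Prop) : Monotone (EopAcc H acc sim) :=
  fun _ _ hle _ h i hi q hq hiq haccq => hle q (h i hi q hq hiq haccq)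

theorem EopAcc_le_guard {Point Agent : Type*} (H : Point → Set Agent) (acc : Point → Prop)
    (sim : Agent → Point → Point → Prop) (φ : Point → Prop) :
    EopAcc H acc sim φ ≤ EopAcc H acc sim (fun q => φ q ∧ acc q ∧ (H q).Nonempty) :=
  fun _ h i hi q hq hiq haccq => ⟨h i hi q hq hiq haccq, haccq, i, hiq⟩

theorem le_YEiterAcc_succ_of_le {Point Agent : Type*} (H : Point → Set Agent)
    (acc : Point → Prop) (sim : Agent → Point → Point → Prop) (Y : Point → Point → Prop)
    {φ G : Point → Prop} (hG : G ≤ Yop Y (EopAcc H acc sim (φ ⊓ G))) :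
    ∀ n, G ≤ YEiterAcc H acc sim Y (n + 1) φ
  | 0 => hG.trans (Yop_mono Y (EopAcc_mono H acc sim inf_le_left))
  | n + 1 => hG.trans (Yop_mono Y (EopAcc_mono H acc sim
      (inf_le_right.trans (le_YEiterAcc_succ_of_le H acc sim Y hG n))))

/-- Induction rule for `acc`-relative indexical common knowledge. -/
theorem induction_rule_acc {Point Agent : Type*} (H : Point → Set Agent)
    (acc : Point → Prop) (sim : Agent → Point → Point → Prop)
    (Y : Point → Point → Prop) (φ ψ : Point → Prop)
    (hyp : ∀ (i : Agent) (p : Point), i ∈ H p → ψ p → acc p →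
      Yop Y (EopAcc H acc sim (fun q => φ q ∧ ψ q)) p) :
    ∀ (i : Agent) (p : Point), i ∈ H p → ψ p → acc p → CopAcc H acc sim Y φ p := by
  intro i p hi hψ hacc n hn
  set G : Point → Prop := fun q => ψ q ∧ acc q ∧ (H q).Nonempty
  have hG : G ≤ Yop Y (EopAcc H acc sim (φ ⊓ G)) := by
    rintro q ⟨hψq, haccq, j, hj⟩
    refine Yop_mono Y ((EopAcc_le_guard H acc sim _).trans (EopAcc_mono H acc sim ?_))
      q (hyp j q hj hψq haccq)
    rintro r ⟨⟨hφr, hψr⟩, haccr, hHr⟩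
    exact ⟨hφr, hψr, haccr, hHr⟩
  obtain ⟨m, rfl⟩ := Nat.exists_eq_add_of_le' hn
  exact le_YEiterAcc_succ_of_le H acc sim Y hG m p ⟨hψ, hacc, i, hi⟩
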